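/- Axiom A condition (3) for Sacks forcing: if p is a perfect tree, n ∈ ω and D a dense open subset of Sacks forcing, then there is a perfect tree q with q ≤_n p (q ⊆ p and spl(q,n) = spl(p,n)) and a countable set B ⊆ D that is predense below q. -/
import Mathlib


/-- A tree on ω^{<ω}: a set of finite sequences closed under initial segments. -/
def IsTree (T : Set (List ℕ)) : Prop :=
  ∀ s t : List ℕ, s <+: t → t ∈ T → s ∈ T

/-- `s` splits in `T`: at least two immediate successors of `s` lie in `T`. -/
def Splits (T : Set (List ℕ)) (s : List ℕ) : Prop :=
  ∃ n m : ℕ, n ≠ m ∧ s ++ [n] ∈ T ∧ s ++ [m] ∈ T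

/-- Perfect (Sacks) tree: nonempty tree in which every node has a splitting extension. -/
def IsPerfect (T : Set (List ℕ)) : Prop :=
  IsTree T ∧ T.Nonempty ∧ ∀ s ∈ T, ∃ t ∈ T, s <+: t ∧ Splits T t

/-- Restriction of a tree at a node: T^{[s]} = {t ∈ T : t ≤ s or s ≤ t}. -/
def restrictTree (T : Set (List ℕ)) (s : List ℕ) : Set (List ℕ) :=
  {t ∈ T | t <+: s ∨ s <+: t}

/-- A branch of `p`: an element of ω^ω all of whose finite initial segments lie in `p`. -/
def IsBranch (p : Set (List ℕ)) (x : ℕ → ℕ) : Prop :=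
  ∀ k : ℕ, (List.range k).map x ∈ p

/-- A front of `p`: an antichain (w.r.t. the initial segment order) meeting every branch. -/
def IsFront (p F : Set (List ℕ)) : Prop :=
  F ⊆ p ∧ (∀ s ∈ F, ∀ t ∈ F, s <+: t → s = t) ∧
    ∀ x : ℕ → ℕ, IsBranch p x → ∃ k, (List.range k).map x ∈ F

/-- The splitting nodes of `p`. -/
def spl (p : Set (List ℕ)) : Set (List ℕ) := {s ∈ p | Splits p s}

/-- The n-th splitting nodes of `p`: splitting nodes with exactly `n` proper initial
segments that are splitting nodes. -/
def splN (p : Set (List ℕ)) (n : ℕ) : Set (List ℕ) :=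
  {s ∈ spl p | {t ∈ spl p | t <+: s ∧ t ≠ s}.ncard = n}

/-- A Laver tree with stem `s₀`: every node is comparable with `s₀`, and every node
extending `s₀` has infinitely many immediate successors in the tree. -/
def IsLaverWithStem (T : Set (List ℕ)) (s₀ : List ℕ) : Prop :=
  IsTree T ∧ s₀ ∈ T ∧ (∀ t ∈ T, t <+: s₀ ∨ s₀ <+: t) ∧
    ∀ t ∈ T, s₀ <+: t → {n : ℕ | t ++ [n] ∈ T}.Infinite

def IsLaver (T : Set (List ℕ)) : Prop := ∃ s₀, IsLaverWithStem T s₀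

/-- Superperfect (Miller) tree. -/
def IsSuperperfect (T : Set (List ℕ)) : Prop :=
  IsTree T ∧ T.Nonempty ∧
    (∀ s ∈ T, {n : ℕ | s ++ [n] ∈ T}.ncard = 1 ∨ {n : ℕ | s ++ [n] ∈ T}.Infinite) ∧
    ∀ s ∈ T, ∃ t ∈ T, s <+: t ∧ {n : ℕ | t ++ [n] ∈ T}.Infinite

/-- Rosłanowski tree. -/
def IsRoslanowski (T : Set (List ℕ)) : Prop :=
  IsTree T ∧ T.Nonempty ∧
    (∀ s ∈ T, {n : ℕ | s ++ [n] ∈ T}.ncard = 1 ∨ ∀ n : ℕ, s ++ [n] ∈ T) ∧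
    ∀ s ∈ T, ∃ t ∈ T, s <+: t ∧ ∀ n : ℕ, t ++ [n] ∈ T

namespace SacksAux

def Cnt (T : Set (List ℕ)) (s : List ℕ) : Set (List ℕ) := {t ∈ spl T | t <+: s ∧ t ≠ s}

lemma splN_eq (T : Set (List ℕ)) (n : ℕ) : splN T n = {s ∈ spl T | (Cnt T s).ncard = n} := rfl

lemma prefix_antisymm {a b : List ℕ} (h1 : a <+: b) (h2 : b <+: a) : a = b :=
  h1.eq_of_length (le_antisymm h1.length_le h2.length_le)

lemma finite_prefixSet (s : List ℕ) : {t : List ℕ | t <+: s}.Finite := by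
  have : {t : List ℕ | t <+: s} ⊆ (fun k => s.take k) '' Set.Iic s.length := by
    rintro t ht
    exact ⟨t.length, ht.length_le, (List.prefix_iff_eq_take.mp ht).symm⟩
  exact ((Set.finite_Iic _).image _).subset this

lemma finite_cnt (T : Set (List ℕ)) (s : List ℕ) : (Cnt T s).Finite :=
  (finite_prefixSet s).subset (fun t ht => ht.2.1)

lemma splits_mono {T T' : Set (List ℕ)} (h : T ⊆ T') {s : List ℕ} (hs : Splits T s) :
    Splits T' s := by
  obtain ⟨a, b, hab, ha, hb⟩ := hs; exact ⟨a, b, hab, h ha, h hb⟩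

lemma spl_mono {T T' : Set (List ℕ)} (h : T ⊆ T') : spl T ⊆ spl T' :=
  fun s hs => ⟨h hs.1, splits_mono h hs.2⟩

/-- minimal-length splitting extension, preserving Cnt -/
lemma min_split_ext {T : Set (List ℕ)} (hT : IsPerfect T) {v : List ℕ} (hv : v ∈ T) :
    ∃ t, t ∈ spl T ∧ v <+: t ∧ Cnt T t = Cnt T v := by
  set S : Set (List ℕ) := {t ∈ spl T | v <+: t} with hS
  have hSne : S.Nonempty := by
    obtain ⟨t, ht, hvt, hsp⟩ := hT.2.2 v hv
    exact ⟨t, ⟨ht, hsp⟩, hvt⟩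
  have hne : (List.length '' S).Nonempty := hSne.image _
  obtain ⟨t, htS, htlen⟩ := Nat.sInf_mem hne
  have hmin : ∀ t' ∈ S, t.length ≤ t'.length := by
    intro t' ht'
    rw [htlen]; exact Nat.sInf_le ⟨t', ht', rfl⟩
  refine ⟨t, htS.1, htS.2, ?_⟩
  ext w
  constructor
  · rintro ⟨hw, hwt, hwne⟩
    rcases List.prefix_or_prefix_of_prefix hwt htS.2 with h | h
    · refine ⟨hw, h, ?_⟩
      rintro rfl
      have hwS : w ∈ S := ⟨hw, List.prefix_rfl⟩
      exact hwne (hwt.eq_of_length (le_antisymm hwt.length_le (hmin w hwS)))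
    · exfalso
      have hwS : w ∈ S := ⟨hw, h⟩
      exact hwne (hwt.eq_of_length (le_antisymm hwt.length_le (hmin w hwS)))
  · rintro ⟨hw, hwv, hwne⟩
    refine ⟨hw, hwv.trans htS.2, ?_⟩
    rintro rfl
    exact hwne (prefix_antisymm hwv htS.2)

lemma cnt_append {T : Set (List ℕ)} {t : List ℕ} (ht : t ∈ spl T) (a : ℕ) :
    Cnt T (t ++ [a]) = insert t (Cnt T t) := by
  ext w
  constructor
  · rintro ⟨hw, hwt, hwne⟩
    have hwlen : w.length ≤ t.length := by
      by_contra hgt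
      push_neg at hgt
      have h1 := hwt.length_le
      have h2 : w.length = (t ++ [a]).length := by
        rw [List.length_append] at h1 ⊢; simp at h1 ⊢; omega
      exact hwne (hwt.eq_of_length h2)
    have hwt' : w <+: t := List.prefix_of_prefix_length_le hwt (List.prefix_append t [a]) hwlen
    by_cases hwe : w = t
    · exact Or.inl hwe
    · exact Or.inr ⟨hw, hwt', hwe⟩
  · rintro (rfl | ⟨hw, hwt, hwne⟩)
    · refine ⟨ht, List.prefix_append w [a], ?_⟩
      intro h
      have := congrArg List.length h
      simp at this
    · refine ⟨hw, hwt.trans (List.prefix_append t [a]), ?_⟩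
      rintro rfl
      have := hwt.length_le
      simp at this

/-- step: a strictly longer splitting node with Cnt incremented by `t` -/
lemma split_step {T : Set (List ℕ)} (hT : IsPerfect T) {t : List ℕ} (ht : t ∈ spl T) :
    ∃ t', t' ∈ spl T ∧ t <+: t' ∧ t ≠ t' ∧ Cnt T t' = insert t (Cnt T t) := by
  obtain ⟨a, b, hab, ha, hb⟩ := ht.2
  obtain ⟨t', ht', hpre, hcnt⟩ := min_split_ext hT ha
  have htt' : t <+: t' := (List.prefix_append t [a]).trans hpre
  have hne : t ≠ t' := by
    rintro rfl
    have := hpre.length_le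
    simp at this
  exact ⟨t', ht', htt', hne, by rw [hcnt, cnt_append ht a]⟩

/-- every splitting node with count ≤ n extends to an n-th splitting node -/
lemma spl_climb {T : Set (List ℕ)} (hT : IsPerfect T) (n : ℕ) :
    ∀ k, ∀ t, t ∈ spl T → (Cnt T t).ncard + k = n → ∃ s ∈ splN T n, t <+: s := by
  intro k
  induction k with
  | zero =>
    intro t ht h
    have h' : (Cnt T t).ncard = n := by omega
    exact ⟨t, ⟨ht, h'⟩, List.prefix_rfl⟩
  | succ k ih =>
    intro t ht h
    obtain ⟨t', ht', htt', hne, hcnt⟩ := split_step hT ht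
    have hmem : t ∉ Cnt T t := fun h => h.2.2 rfl
    have : (Cnt T t').ncard = (Cnt T t).ncard + 1 := by
      rw [hcnt, Set.ncard_insert_of_notMem hmem (finite_cnt T t)]
    obtain ⟨s, hs, hts⟩ := ih t' ht' (by omega)
    exact ⟨s, hs, htt'.trans hts⟩

lemma node_climb {T : Set (List ℕ)} (hT : IsPerfect T) (n : ℕ) {v : List ℕ} (hv : v ∈ T)
    (hle : (Cnt T v).ncard ≤ n) : ∃ s ∈ splN T n, v <+: s := by
  obtain ⟨t, ht, hvt, hcnt⟩ := min_split_ext hT hv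
  obtain ⟨s, hs, hts⟩ := spl_climb hT n (n - (Cnt T v).ncard) t ht (by rw [hcnt]; omega)
  exact ⟨s, hs, hvt.trans hts⟩

lemma nil_mem {T : Set (List ℕ)} (hT : IsPerfect T) : ([] : List ℕ) ∈ T := by
  obtain ⟨t, ht⟩ := hT.2.1
  exact hT.1 [] t t.nil_prefix ht

lemma splN_nonempty {T : Set (List ℕ)} (hT : IsPerfect T) (n : ℕ) : (splN T n).Nonempty := by
  have h0 : (Cnt T ([] : List ℕ)).ncard ≤ n := by
    have : Cnt T ([] : List ℕ) = ∅ := by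
      ext w
      simp only [Cnt, Set.mem_setOf_eq, Set.mem_empty_iff_false, iff_false]
      rintro ⟨_, hw, hne⟩
      exact hne (List.prefix_nil.mp hw)
    rw [this]; simp
  obtain ⟨s, hs, _⟩ := node_climb hT n (nil_mem hT) h0
  exact ⟨s, hs⟩

/-- splN is a prefix-antichain -/
lemma splN_antichain {T : Set (List ℕ)} (n : ℕ) {s s' : List ℕ}
    (hs : s ∈ splN T n) (hs' : s' ∈ splN T n) (h : s <+: s') : s = s' := by
  by_contra hne
  have hsub : insert s (Cnt T s) ⊆ Cnt T s' := by
    rintro w (rfl | ⟨hw, hws, hwne⟩)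
    · exact ⟨hs.1, h, hne⟩
    · refine ⟨hw, hws.trans h, ?_⟩
      rintro rfl
      exact hne (prefix_antisymm h hws)
  have hmem : s ∉ Cnt T s := fun h => h.2.2 rfl
  have hcs : (Cnt T s).ncard = n := hs.2
  have hcs' : (Cnt T s').ncard = n := hs'.2
  have h1 : (insert s (Cnt T s)).ncard = n + 1 := by
    rw [Set.ncard_insert_of_notMem hmem (finite_cnt T s), hcs]
  have h2 : (insert s (Cnt T s)).ncard ≤ (Cnt T s').ncard :=
    Set.ncard_le_ncard hsub (finite_cnt T s')
  rw [h1, hcs'] at h2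
  omega

lemma restrict_perfect {T : Set (List ℕ)} (hT : IsPerfect T) {v : List ℕ} (hv : v ∈ T) :
    IsPerfect (restrictTree T v) := by
  refine ⟨?_, ⟨v, hv, Or.inl List.prefix_rfl⟩, ?_⟩
  · rintro s t hst ⟨ht, hcomp⟩
    refine ⟨hT.1 s t hst ht, ?_⟩
    rcases hcomp with h | h
    · exact Or.inl (hst.trans h)
    · exact List.prefix_or_prefix_of_prefix hst h
  · rintro s ⟨hs, hcomp⟩
    have : ∃ s₁ ∈ T, v <+: s₁ ∧ s <+: s₁ := by
      rcases hcomp with h | h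
      · exact ⟨v, hv, List.prefix_rfl, h⟩
      · exact ⟨s, hs, h, List.prefix_rfl⟩
    obtain ⟨s₁, hs₁, hvs₁, hss₁⟩ := this
    obtain ⟨t, ht, hs₁t, a, b, hab, ha, hb⟩ := hT.2.2 s₁ hs₁
    have hvt : v <+: t := hvs₁.trans hs₁t
    refine ⟨t, ⟨ht, Or.inr hvt⟩, hss₁.trans hs₁t,
      a, b, hab, ⟨ha, Or.inr (hvt.trans (List.prefix_append t [a]))⟩,
      ⟨hb, Or.inr (hvt.trans (List.prefix_append t [b]))⟩⟩

/-- a perfect tree all of whose nodes are comparable with u contains u -/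
lemma mem_of_all_comparable {T : Set (List ℕ)} (hT : IsPerfect T) {u : List ℕ}
    (h : ∀ t ∈ T, t <+: u ∨ u <+: t) : u ∈ T := by
  obtain ⟨v, hv⟩ := hT.2.1
  obtain ⟨t, ht, _, a, b, hab, ha, hb⟩ := hT.2.2 v hv
  have key : ∃ w ∈ T, u <+: w := by
    rcases h _ ha with h1 | h1
    · rcases h _ hb with h2 | h2
      · exfalso
        have hp : t ++ [a] <+: t ++ [b] :=
          List.prefix_of_prefix_length_le h1 h2 (by simp)
        have heq : t ++ [a] = t ++ [b] := hp.eq_of_length (by simp)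
        have : a = b := by simpa using heq
        exact hab this
      · exact ⟨t ++ [b], hb, h2⟩
    · exact ⟨t ++ [a], ha, h1⟩
  obtain ⟨w, hw, huw⟩ := key
  exact hT.1 u w huw hw

/-- unboundedly many splitting nodes downward in a perfect tree -/
lemma many_splits {T : Set (List ℕ)} (hT : IsPerfect T) :
    ∀ m, ∀ v ∈ T, ∃ t ∈ spl T, v <+: t ∧ m ≤ (Cnt T t).ncard := by
  intro m
  induction m with
  | zero =>
    intro v hv
    obtain ⟨t, ht, hvt, _⟩ := min_split_ext hT hv
    exact ⟨t, ht, hvt, Nat.zero_le _⟩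
  | succ m ih =>
    intro v hv
    obtain ⟨t, ht, hvt, hm⟩ := ih v hv
    obtain ⟨t', ht', htt', hne, hcnt⟩ := split_step hT ht
    refine ⟨t', ht', hvt.trans htt', ?_⟩
    have hmem : t ∉ Cnt T t := fun h => h.2.2 rfl
    rw [hcnt, Set.ncard_insert_of_notMem hmem (finite_cnt T t)]
    omega

end SacksAux


open SacksAux in
/-- Axiom A condition (3) for Sacks forcing: given a dense open `D`, `p`
perfect and `n`, there is `q ≤ₙ p` and a countable `B ⊆ D` predense below `q`. -/
theorem sacks_axiomA_three (p : Set (List ℕ)) (hp : IsPerfect p) (n : ℕ)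
    (D : Set (Set (List ℕ))) (hD : ∀ q ∈ D, IsPerfect q)
    (hdense : ∀ q, IsPerfect q → ∃ r ∈ D, r ⊆ q)
    (hopen : ∀ q ∈ D, ∀ r, IsPerfect r → r ⊆ q → r ∈ D) :
    ∃ q, IsPerfect q ∧ q ⊆ p ∧ splN q n = splN p n ∧
      ∃ B ⊆ D, B.Countable ∧
        ∀ r, IsPerfect r → r ⊆ q → ∃ b ∈ B, ∃ w, IsPerfect w ∧ w ⊆ r ∧ w ⊆ b := by
  classical
  -- the set of immediate successors of n-th splitting nodes
  set F : Set (List ℕ) := {u | ∃ s ∈ splN p n, ∃ k : ℕ, u = s ++ [k] ∧ u ∈ p} with hFdef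
  have hFp : ∀ u ∈ F, u ∈ p := by rintro u ⟨s, hs, k, rfl, hu⟩; exact hu
  have hres : ∀ u ∈ F, ∃ r ∈ D, r ⊆ restrictTree p u :=
    fun u hu => hdense _ (restrict_perfect hp (hFp u hu))
  choose! Q hQD hQsub using hres
  have hQperf : ∀ u ∈ F, IsPerfect (Q u) := fun u hu => hD _ (hQD u hu)
  have hQcomp : ∀ u ∈ F, ∀ t ∈ Q u, t <+: u ∨ u <+: t := fun u hu t ht => (hQsub u hu ht).2
  have hQmem : ∀ u ∈ F, u ∈ Q u :=
    fun u hu => mem_of_all_comparable (hQperf u hu) (hQcomp u hu)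
  -- the fusion candidate
  set q : Set (List ℕ) := ⋃ u ∈ F, Q u with hqdef
  have hmemq : ∀ t, t ∈ q ↔ ∃ u ∈ F, t ∈ Q u := by
    intro t
    rw [hqdef]
    simp
  have hQq : ∀ u ∈ F, Q u ⊆ q := fun u hu t ht => (hmemq t).mpr ⟨u, hu, ht⟩
  have hqp : q ⊆ p := by
    intro t ht
    obtain ⟨u, hu, htu⟩ := (hmemq t).mp ht
    exact (hQsub u hu htu).1
  -- q is perfect
  have hqtree : IsTree q := by
    intro s t hst ht
    obtain ⟨u, hu, htu⟩ := (hmemq t).mp ht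
    exact hQq u hu ((hQperf u hu).1 s t hst htu)
  have hFne : F.Nonempty := by
    obtain ⟨s, hs⟩ := splN_nonempty hp n
    obtain ⟨a, b, hab, ha, hb⟩ := hs.1.2
    exact ⟨s ++ [a], s, hs, a, rfl, ha⟩
  have hqperf : IsPerfect q := by
    refine ⟨hqtree, ?_, ?_⟩
    · obtain ⟨u, hu⟩ := hFne
      exact ⟨u, hQq u hu (hQmem u hu)⟩
    · intro s hs
      obtain ⟨u, hu, hsu⟩ := (hmemq s).mp hs
      obtain ⟨t, ht, hst, hsp⟩ := (hQperf u hu).2.2 s hsu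
      exact ⟨t, hQq u hu ht, hst, splits_mono (hQq u hu) hsp⟩
  -- F is an antichain
  have hsplNcomp : ∀ s ∈ splN p n, ∀ s' ∈ splN p n, (s <+: s' ∨ s' <+: s) → s = s' := by
    rintro s hs s' hs' (h | h)
    · exact splN_antichain n hs hs' h
    · exact (splN_antichain n hs' hs h).symm
  have hFanti : ∀ u ∈ F, ∀ u' ∈ F, (u <+: u' ∨ u' <+: u) → u = u' := by
    rintro u ⟨s, hs, k, rfl, _⟩ u' ⟨s', hs', k', rfl, _⟩ hcomp
    have hcomp' : s <+: s' ∨ s' <+: s := by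
      rcases hcomp with h | h
      · exact List.prefix_or_prefix_of_prefix
          ((List.prefix_append s [k]).trans h) (List.prefix_append s' [k'])
      · exact (List.prefix_or_prefix_of_prefix
          ((List.prefix_append s' [k']).trans h) (List.prefix_append s [k])).symm
    have hss : s = s' := hsplNcomp s hs s' hs' hcomp'
    subst hss
    rcases hcomp with h | h
    · exact h.eq_of_length (by simp)
    · exact (h.eq_of_length (by simp)).symm
  -- low nodes of p belong to q
  have hK : ∀ t ∈ p, (Cnt p t).ncard ≤ n → t ∈ q := by
    intro t ht hle
    obtain ⟨s, hs, hts⟩ := node_climb hp n ht hle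
    obtain ⟨a, b, hab, ha, hb⟩ := hs.1.2
    have huF : s ++ [a] ∈ F := ⟨s, hs, a, rfl, ha⟩
    have : s ++ [a] ∈ q := hQq _ huF (hQmem _ huF)
    exact hqtree t (s ++ [a]) (hts.trans (List.prefix_append s [a])) this
  -- strict splitting predecessors of n-th splitting nodes split in q
  have hsub0 : ∀ s₀ ∈ splN p n, ∀ t, t <+: s₀ → t ≠ s₀ → Cnt p t ⊆ Cnt p s₀ := by
    intro s₀ hs₀ t hts hne w hw
    refine ⟨hw.1, hw.2.1.trans hts, ?_⟩
    rintro rfl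
    exact hne (prefix_antisymm hts (hw.2.1))
  have hD' : ∀ s₀ ∈ splN p n, ∀ t, t ∈ spl p → t <+: s₀ → t ≠ s₀ → t ∈ spl q := by
    intro s₀ hs₀ t ht hts hne
    have hcnt : (Cnt p s₀).ncard = n := hs₀.2
    have hins : insert t (Cnt p t) ⊆ Cnt p s₀ := by
      rintro w (rfl | hw)
      · exact ⟨ht, hts, hne⟩
      · exact hsub0 s₀ hs₀ t hts hne hw
    have hinscard : (insert t (Cnt p t)).ncard ≤ n := by
      rw [← hcnt]; exact Set.ncard_le_ncard hins (finite_cnt p s₀)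
    have htq : t ∈ q := hK t ht.1 (le_trans
      (Set.ncard_le_ncard (Set.subset_insert t (Cnt p t))
        ((finite_cnt p t).insert t)) hinscard)
    obtain ⟨a, b, hab, ha, hb⟩ := ht.2
    have hsucc : ∀ x : ℕ, t ++ [x] ∈ p → t ++ [x] ∈ q := by
      intro x hx
      apply hK _ hx
      rw [cnt_append ht x]
      exact hinscard
    exact ⟨htq, a, b, hab, hsucc a ha, hsucc b hb⟩
  -- n-th splitting nodes of p split in q
  have hs₀q : ∀ s₀ ∈ splN p n, s₀ ∈ spl q := by
    intro s₀ hs₀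
    have hcnt : (Cnt p s₀).ncard = n := hs₀.2
    have h₀ : s₀ ∈ q := hK s₀ hs₀.1.1 (le_of_eq hcnt)
    obtain ⟨a, b, hab, ha, hb⟩ := hs₀.1.2
    have hua : s₀ ++ [a] ∈ F := ⟨s₀, hs₀, a, rfl, ha⟩
    have hub : s₀ ++ [b] ∈ F := ⟨s₀, hs₀, b, rfl, hb⟩
    exact ⟨h₀, a, b, hab, hQq _ hua (hQmem _ hua), hQq _ hub (hQmem _ hub)⟩
  have hcnt_eq : ∀ s₀ ∈ splN p n, Cnt q s₀ = Cnt p s₀ := by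
    intro s₀ hs₀
    ext w
    constructor
    · rintro ⟨hw, h1, h2⟩
      exact ⟨spl_mono hqp hw, h1, h2⟩
    · rintro ⟨hw, h1, h2⟩
      exact ⟨hD' s₀ hs₀ w hw h1 h2, h1, h2⟩
  -- splN q n = splN p n
  have hsplN : splN q n = splN p n := by
    ext s
    constructor
    · rintro hsq
      have hsq2 : (Cnt q s).ncard = n := hsq.2
      have hsq' : s ∈ q := hsq.1.1
      obtain ⟨u, hu, hsu⟩ := (hmemq s).mp hsq'
      obtain ⟨s₀, hs₀, k, rfl, hup⟩ := hu
      have huF : s₀ ++ [k] ∈ F := ⟨s₀, hs₀, k, rfl, hup⟩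
      have hcomp := hQcomp _ huF s hsu
      -- rule out the case that s properly extends s₀
      have hnotext : ¬ (s₀ <+: s ∧ s₀ ≠ s) := by
        rintro ⟨h1, h2⟩
        have hins : insert s₀ (Cnt q s₀) ⊆ Cnt q s := by
          rintro w (heq | ⟨hw, hw1, hw2⟩)
          · exact heq ▸ ⟨hs₀q s₀ hs₀, h1, h2⟩
          · refine ⟨hw, hw1.trans h1, fun heq => hw2 ?_⟩
            subst heq
            exact prefix_antisymm hw1 h1
        have hcard : (insert s₀ (Cnt q s₀)).ncard = n + 1 := by
          rw [Set.ncard_insert_of_notMem (fun h => h.2.2 rfl)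
            ((finite_prefixSet s₀).subset (fun t ht => ht.2.1)),
            hcnt_eq s₀ hs₀]
          exact congrArg (· + 1) hs₀.2
        have := Set.ncard_le_ncard hins ((finite_prefixSet s).subset (fun t ht => ht.2.1))
        rw [hcard, hsq2] at this
        omega
      -- hence s is a prefix of s₀
      have hss₀ : s <+: s₀ := by
        rcases hcomp with h | h
        · rcases Nat.lt_or_ge s.length (s₀ ++ [k]).length with hl | hl
          · refine List.prefix_of_prefix_length_le h (List.prefix_append s₀ [k]) ?_
            simp at hl ⊢; omega
          · exfalso
            have : s = s₀ ++ [k] := (h.eq_of_length (le_antisymm h.length_le hl))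
            subst this
            exact hnotext ⟨List.prefix_append s₀ [k], by
              intro hh
              have := congrArg List.length hh
              simp at this⟩
        · exfalso
          exact hnotext ⟨(List.prefix_append s₀ [k]).trans h, by
            rintro rfl
            have := h.length_le
            simp at this⟩
      have hsp : s ∈ spl p := spl_mono hqp hsq.1
      have hCeq : Cnt p s = Cnt q s := by
        ext w
        constructor
        · rintro ⟨hw, h1, h2⟩
          have hws₀ : w <+: s₀ := h1.trans hss₀
          have hwne : w ≠ s₀ := by
            intro heq
            subst heq
            exact h2 (prefix_antisymm h1 hss₀)
          exact ⟨hD' s₀ hs₀ w hw hws₀ hwne, h1, h2⟩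
        · rintro ⟨hw, h1, h2⟩
          exact ⟨spl_mono hqp hw, h1, h2⟩
      refine ⟨hsp, ?_⟩
      show (Cnt p s).ncard = n
      rw [hCeq]; exact hsq2
    · rintro hs₀
      refine ⟨hs₀q s hs₀, ?_⟩
      show (Cnt q s).ncard = n
      rw [hcnt_eq s hs₀]; exact hs₀.2
  -- the countable predense set
  refine ⟨q, hqperf, hqp, hsplN, Q '' F, ?_, (F.to_countable).image Q, ?_⟩
  · rintro b ⟨u, hu, rfl⟩
    exact hQD u hu
  · intro r hr hrq
    obtain ⟨v, hv⟩ := hr.2.1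
    obtain ⟨t, ht, hvt, hcard⟩ := many_splits hr (n + 1) v hv
    obtain ⟨u, hu, htu⟩ := (hmemq t).mp (hrq ht.1)
    have hcompt := hQcomp u hu t htu
    have hut : u <+: t := by
      rcases hcompt with h | h
      · -- t <+: u: contradiction with count
        by_cases he : t = u
        · exact he ▸ List.prefix_rfl
        exfalso
        obtain ⟨s₀, hs₀, k, rfl, hup⟩ := hu
        have hts₀ : t <+: s₀ := by
          refine List.prefix_of_prefix_length_le h (List.prefix_append s₀ [k]) ?_
          have h1 := h.length_le
          have h2 : t.length ≠ (s₀ ++ [k]).length := fun hh => he (h.eq_of_length hh)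
          simp at h1 h2 ⊢; omega
        have hsub : Cnt r t ⊆ Cnt p s₀ := by
          rintro w ⟨hw, h1, h2⟩
          refine ⟨spl_mono (hrq.trans hqp) hw, h1.trans hts₀, fun heq => h2 ?_⟩
          subst heq
          exact prefix_antisymm h1 hts₀
        have := Set.ncard_le_ncard hsub (finite_cnt p s₀)
        have hcnt : (Cnt p s₀).ncard = n := hs₀.2
        omega
      · exact h
    -- now build the witness
    have hQuq : ∀ x ∈ r, t <+: x → x ∈ Q u := by
      intro x hx htx
      obtain ⟨u', hu', hxu'⟩ := (hmemq x).mp (hrq hx)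
      rcases hQcomp u' hu' x hxu' with h | h
      · -- x <+: u'
        have huu' : u = u' := hFanti u hu u' hu'
          (Or.inl ((hut.trans htx).trans h))
        subst huu'
        have hxeq : x = u := prefix_antisymm h (hut.trans htx)
        rw [hxeq]
        exact hQmem u hu
      · have huu' : u = u' := hFanti u hu u' hu'
          (List.prefix_or_prefix_of_prefix (hut.trans htx) h)
        subst huu'
        exact hxu'
    have htQu : t ∈ Q u := hQuq t ht.1 List.prefix_rfl
    refine ⟨Q u, ⟨u, hu, rfl⟩, restrictTree r t, restrict_perfect hr ht.1,
      fun x hx => hx.1, ?_⟩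
    rintro x ⟨hx, hcx⟩
    rcases hcx with h | h
    · exact (hQperf u hu).1 x t h htQu
    · exact hQuq x hx h
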